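/- arXiv:2207.04486 — 4 statements merged into one kernel-verified Lean document; each statement's English description precedes it below -/
import Mathlib

section
/- For every bounded continuous section f of π and every y ∈ Y, iQ_t f(y) converges to max_{j=1,…,κ} f_j(y) as t → 0⁺. -/
open Metric Set Filter Topology MeasureTheory

/-- `F(t,y,z) = max_j f_j(z) + d(f(z), π⁻¹(y))² / (2t)`. -/
noncomputable def hlF {κ : ℕ} (Y : Set (EuclideanSpace ℝ (Fin κ)))
    (π : EuclideanSpace ℝ (Fin κ) → Y) (f : Y → EuclideanSpace ℝ (Fin κ))
    (t : ℝ) (y z : Y) : ℝ :=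
  (⨆ j, f z j) + (Metric.infDist (f z) (π ⁻¹' {y}))^2 / (2*t)

/-- The intrinsic Hopf–Lax semigroup `iQ_t f(y) = inf_{z ∈ Y} F(t,y,z)`. -/
noncomputable def iQ {κ : ℕ} (Y : Set (EuclideanSpace ℝ (Fin κ)))
    (π : EuclideanSpace ℝ (Fin κ) → Y) (f : Y → EuclideanSpace ℝ (Fin κ))
    (t : ℝ) (y : Y) : ℝ :=
  ⨅ z : Y, hlF Y π f t y z

/-- A minimizing sequence for `iQ_t f(y)`. -/
def IsMinSeq {κ : ℕ} (Y : Set (EuclideanSpace ℝ (Fin κ)))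
    (π : EuclideanSpace ℝ (Fin κ) → Y) (f : Y → EuclideanSpace ℝ (Fin κ))
    (t : ℝ) (y : Y) (u : ℕ → Y) : Prop :=
  Filter.Tendsto (fun n => hlF Y π f t y (u n)) Filter.atTop (nhds (iQ Y π f t y))

/-- `iD⁺f(y,t)`. -/
noncomputable def iDp {κ : ℕ} (Y : Set (EuclideanSpace ℝ (Fin κ)))
    (π : EuclideanSpace ℝ (Fin κ) → Y) (f : Y → EuclideanSpace ℝ (Fin κ))
    (y : Y) (t : ℝ) : ℝ :=
  sSup { a : ℝ | ∃ u : ℕ → Y, IsMinSeq Y π f t y u ∧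
    a = Filter.limsup (fun n => Metric.infDist (f (u n)) (π ⁻¹' {y})) Filter.atTop }

/-- `iD⁻f(y,t)`. -/
noncomputable def iDm {κ : ℕ} (Y : Set (EuclideanSpace ℝ (Fin κ)))
    (π : EuclideanSpace ℝ (Fin κ) → Y) (f : Y → EuclideanSpace ℝ (Fin κ))
    (y : Y) (t : ℝ) : ℝ :=
  sInf { a : ℝ | ∃ u : ℕ → Y, IsMinSeq Y π f t y u ∧
    a = Filter.liminf (fun n => Metric.infDist (f (u n)) (π ⁻¹' {y})) Filter.atTop }

/-!
Choosing `z = y` gives `iQ_t f(y) ≤ max_j f_j(y)` for every `t`. Conversely, fix `ε > 0`; the points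
`x` with `max_j f_j(π x) > max_j f_j(y) - ε` form an open neighbourhood `U` of the closed fibre
`π⁻¹(y)`. Since `f` has relatively compact range, the points `f z ∉ U` stay at distance at least some
`δ > 0` from that fibre, so their penalty `d(f(z), π⁻¹(y))² / 2t ≥ δ² / 2t` outweighs the bounded
oscillation of `max_j f_j` once `t` is small, while the points `f z ∈ U` already have value
`> max_j f_j(y) - ε`.
-/

theorem IsCompact.exists_pos_forall_le_infDist {X : Type*} [PseudoMetricSpace X] {K A U : Set X}
    (hK : IsCompact K) (hA : IsClosed A) (hAne : A.Nonempty) (hU : IsOpen U) (hAU : A ⊆ U) :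
    ∃ δ > 0, ∀ x ∈ K, x ∉ U → δ ≤ infDist x A := by
  obtain ⟨δ, hδ, hle⟩ := (hK.diff hU).exists_forall_le' (continuous_infDist_pt A).continuousOn
    fun x hx ↦ (hA.notMem_iff_infDist_pos hAne).1 fun hxA ↦ hx.2 (hAU hxA)
  exact ⟨δ, hδ, fun x hxK hxU ↦ hle x ⟨hxK, hxU⟩⟩

section HopfLax

variable {X Y : Type*} [PseudoMetricSpace X]

noncomputable def hopfLax (π : X → Y) (s : Y → X) (g : Y → ℝ) (t : ℝ) (y : Y) : ℝ :=
  ⨅ z, g z + infDist (s z) (π ⁻¹' {y}) ^ 2 / (2 * t)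

variable {π : X → Y} {s : Y → X} {g : Y → ℝ} {t : ℝ} {y : Y}

lemma bddBelow_range_hopfLax (hgb : BddBelow (range g)) (ht : 0 ≤ t) :
    BddBelow (range fun z ↦ g z + infDist (s z) (π ⁻¹' {y}) ^ 2 / (2 * t)) := by
  obtain ⟨m, hm⟩ := hgb
  refine ⟨m, forall_mem_range.2 fun z ↦ ?_⟩
  have := hm (mem_range_self z)
  have : 0 ≤ infDist (s z) (π ⁻¹' {y}) ^ 2 / (2 * t) := by positivity
  linarith

lemma hopfLax_le (hs : ∀ z, π (s z) = z) (hgb : BddBelow (range g)) (ht : 0 ≤ t) :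
    hopfLax π s g t y ≤ g y := by
  refine (ciInf_le (bddBelow_range_hopfLax hgb ht) y).trans_eq ?_
  rw [infDist_zero_of_mem (by simp [hs]), sq, zero_mul, zero_div, add_zero]

variable [TopologicalSpace Y]

lemma eventually_sub_le_hopfLax [T1Space Y] (hπ : Continuous π) (hs : ∀ z, π (s z) = z)
    (hK : IsCompact (closure (range s))) (hg : ContinuousAt g y) (hgb : BddBelow (range g))
    {ε : ℝ} (hε : 0 < ε) : ∀ᶠ t in 𝓝[>] 0, g y - ε ≤ hopfLax π s g t y := by
  obtain ⟨V, hVg, hVo, hyV⟩ := mem_nhds_iff.1 (hg.eventually (lt_mem_nhds (sub_lt_self (g y) hε)))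
  have hfibre : π ⁻¹' {y} ⊆ π ⁻¹' V := preimage_mono (singleton_subset_iff.2 hyV)
  obtain ⟨δ, hδ, hfar⟩ := hK.exists_pos_forall_le_infDist (isClosed_singleton.preimage hπ)
    ⟨s y, by simp [hs]⟩ (hVo.preimage hπ) hfibre
  obtain ⟨m, hm⟩ := hgb
  have : Nonempty Y := ⟨y⟩
  have hpenalty : Tendsto (fun t : ℝ ↦ δ ^ 2 / (2 * t)) (𝓝[>] 0) atTop := by
    refine (tendsto_inv_nhdsGT_zero.atTop_mul_const (by positivity : (0 : ℝ) < δ ^ 2 / 2)).congr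
      fun t ↦ ?_
    ring
  filter_upwards [self_mem_nhdsWithin, hpenalty.eventually_ge_atTop (g y - m)]
    with t (ht : 0 < t) hbig
  refine le_ciInf fun z ↦ ?_
  by_cases hz : s z ∈ π ⁻¹' V
  · have hnear : g y - ε < g z := hVg (by simpa [hs] using hz)
    have : 0 ≤ infDist (s z) (π ⁻¹' {y}) ^ 2 / (2 * t) := by positivity
    linarith
  · have hδz := hfar (s z) (subset_closure (mem_range_self z)) hz
    have : δ ^ 2 / (2 * t) ≤ infDist (s z) (π ⁻¹' {y}) ^ 2 / (2 * t) := by gcongr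
    linarith [hm (mem_range_self z)]

theorem tendsto_hopfLax [T1Space Y] (hπ : Continuous π) (hs : ∀ z, π (s z) = z)
    (hK : IsCompact (closure (range s))) (hg : ContinuousAt g y) (hgb : BddBelow (range g)) :
    Tendsto (fun t ↦ hopfLax π s g t y) (𝓝[>] 0) (𝓝 (g y)) := by
  refine tendsto_order.2 ⟨fun a ha ↦ ?_, fun a ha ↦ ?_⟩
  · filter_upwards [eventually_sub_le_hopfLax hπ hs hK hg hgb (half_pos (sub_pos.2 ha))] with t ht
    linarith
  · filter_upwards [self_mem_nhdsWithin] with t (ht : 0 < t)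
    exact (hopfLax_le hs hgb ht.le).trans_lt ha

end HopfLax

lemma EuclideanSpace.continuous_iSup_apply {ι : Type*} [Fintype ι] [Nonempty ι] :
    Continuous fun v : EuclideanSpace ℝ ι ↦ ⨆ i, v i := by
  simp_rw [← Finset.sup'_univ_eq_ciSup]
  exact Continuous.finset_sup'_apply _ fun i _ ↦ (EuclideanSpace.proj i).continuous

theorem stmt_1_general (κ : ℕ) (hκ : 1 ≤ κ)
    (Y : Set (EuclideanSpace ℝ (Fin κ)))
    (π : EuclideanSpace ℝ (Fin κ) → Y) (hπc : Continuous π)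
    (f : Y → EuclideanSpace ℝ (Fin κ)) (hfc : Continuous f)
    (hfb : Bornology.IsBounded (Set.range f)) (hsec : ∀ y : Y, π (f y) = y)

    (y : Y) :
    Filter.Tendsto (fun t => iQ Y π f t y) (nhdsWithin 0 (Set.Ioi (0:ℝ)))
      (nhds (⨆ j, f y j)) := by
  have : Nonempty (Fin κ) := ⟨⟨0, hκ⟩⟩
  have hmax := EuclideanSpace.continuous_iSup_apply (ι := Fin κ)
  have hK : IsCompact (closure (range f)) := hfb.isCompact_closure
  have hbdd : BddBelow (range fun z ↦ ⨆ j, f z j) :=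
    (hK.image hmax).bddBelow.mono <| by
      rintro _ ⟨z, rfl⟩
      exact mem_image_of_mem _ (subset_closure (mem_range_self z))
  exact tendsto_hopfLax hπc hsec hK (hmax.comp hfc).continuousAt hbdd

theorem stmt_1 (κ : ℕ) (hκ : 1 ≤ κ)
    (Y : Set (EuclideanSpace ℝ (Fin κ))) (hY : Y.Nonempty) (hYb : Bornology.IsBounded Y)
    (π : EuclideanSpace ℝ (Fin κ) → Y) (hπc : Continuous π) (hπo : IsOpenMap π)
    (hπs : Function.Surjective π)
    (f : Y → EuclideanSpace ℝ (Fin κ)) (hfc : Continuous f)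
    (hfb : Bornology.IsBounded (Set.range f)) (hsec : ∀ y : Y, π (f y) = y)

    (y : Y) :
    Filter.Tendsto (fun t => iQ Y π f t y) (nhdsWithin 0 (Set.Ioi (0:ℝ)))
      (nhds (⨆ j, f y j)) :=
  stmt_1_general κ hκ Y π hπc f hfc hfb hsec y
end

section
/- If f is a bounded continuous section of π that is intrinsically L-Lipschitz for some L ≥ 1, then for every y ∈ Y and every t > 0 one has iD⁻f(y, t) ≤ iD⁺f(y, t) ≤ 2tL. -/
open Metric Set Filter Topology MeasureTheory

lemma coord_abs_le {κ : ℕ} (x : EuclideanSpace ℝ (Fin κ)) (j : Fin κ) : |x j| ≤ ‖x‖ := by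
  rw [EuclideanSpace.norm_eq]
  have h1 : |x j| = Real.sqrt (|x j| ^ 2) := by rw [sq_abs, Real.sqrt_sq_eq_abs]
  rw [h1]
  apply Real.sqrt_le_sqrt
  have := Finset.single_le_sum (f := fun i => ‖x i‖ ^ 2) (fun i _ => by positivity)
    (Finset.mem_univ j)
  simpa [Real.norm_eq_abs] using this

lemma coord_sub_le {κ : ℕ} (x z : EuclideanSpace ℝ (Fin κ)) (j : Fin κ) :
    x j - z j ≤ dist x z := by
  rw [dist_eq_norm]
  calc x j - z j ≤ |x j - z j| := le_abs_self _
    _ = |(x - z) j| := by simp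
    _ ≤ ‖x - z‖ := coord_abs_le _ _


theorem stmt_4 (κ : ℕ) (hκ : 1 ≤ κ)
    (Y : Set (EuclideanSpace ℝ (Fin κ))) (hY : Y.Nonempty) (hYb : Bornology.IsBounded Y)
    (π : EuclideanSpace ℝ (Fin κ) → Y) (hπc : Continuous π) (hπo : IsOpenMap π)
    (hπs : Function.Surjective π)
    (f : Y → EuclideanSpace ℝ (Fin κ)) (hfc : Continuous f)
    (hfb : Bornology.IsBounded (Set.range f)) (hsec : ∀ y : Y, π (f y) = y)

    (L : ℝ) (hL : 1 ≤ L)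
    (hlip : ∀ y₁ y₂ : Y, dist (f y₁) (f y₂) ≤ L * Metric.infDist (f y₁) (π ⁻¹' {y₂}))
    (y : Y) (t : ℝ) (ht : 0 < t) :
    iDm Y π f y t ≤ iDp Y π f y t ∧ iDp Y π f y t ≤ 2 * t * L := by
  haveI : Nonempty Y := ⟨y⟩
  haveI : Nonempty (Fin κ) := Fin.pos_iff_nonempty.mp hκ
  obtain ⟨M, hM⟩ := isBounded_iff_forall_norm_le.mp hfb
  have hMf : ∀ z : Y, ‖f z‖ ≤ M := fun z => hM _ (mem_range_self z)
  have hfy_mem : f y ∈ π ⁻¹' {y} := by simp [hsec y]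
  set D : Y → ℝ := fun z => Metric.infDist (f z) (π ⁻¹' {y}) with hD
  have hDnn : ∀ z, 0 ≤ D z := fun z => Metric.infDist_nonneg
  have hDle : ∀ z, D z ≤ 2 * M := by
    intro z
    calc D z ≤ dist (f z) (f y) := Metric.infDist_le_dist_of_mem hfy_mem
      _ = ‖f z - f y‖ := dist_eq_norm _ _
      _ ≤ ‖f z‖ + ‖f y‖ := norm_sub_le _ _
      _ ≤ 2 * M := by linarith [hMf z, hMf y]
  have hDy : D y = 0 := Metric.infDist_zero_of_mem hfy_mem
  -- bounds on the coordinate sup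
  have hsup_le : ∀ z : Y, (⨆ j, f z j) ≤ M := fun z =>
    ciSup_le fun j => ((le_abs_self _).trans (coord_abs_le _ j)).trans (hMf z)
  have hsup_ge : ∀ z : Y, -M ≤ (⨆ j, f z j) := by
    intro z
    have h1 : -M ≤ f z (Classical.arbitrary _) := by
      have := (coord_abs_le (f z) (Classical.arbitrary _)).trans (hMf z)
      have := neg_abs_le (f z (Classical.arbitrary _))
      linarith
    exact h1.trans (le_ciSup (Finite.bddAbove_range _) _)
  -- hlF is bounded below
  have hlF_ge : ∀ z : Y, -M ≤ hlF Y π f t y z := by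
    intro z
    have h0 : 0 ≤ (D z)^2 / (2*t) := by positivity
    have h1 := hsup_ge z
    have h2 : hlF Y π f t y z = (⨆ j, f z j) + (D z)^2 / (2*t) := rfl
    rw [h2]; linarith
  -- iQ ≤ sup f y
  have hiQ_le : iQ Y π f t y ≤ ⨆ j, f y j := by
    have : iQ Y π f t y ≤ hlF Y π f t y y :=
      ciInf_le ⟨-M, by rintro a ⟨z, rfl⟩; exact hlF_ge z⟩ y
    calc iQ Y π f t y ≤ hlF Y π f t y y := this
      _ = ⨆ j, f y j := by
          unfold hlF; rw [Metric.infDist_zero_of_mem hfy_mem]; simp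
  -- existence of a minimizing sequence
  obtain ⟨v, -, hv_tendsto, hv_mem⟩ :=
    exists_seq_tendsto_sInf (S := Set.range (fun z => hlF Y π f t y z))
      (Set.range_nonempty _) ⟨-M, by rintro a ⟨z, rfl⟩; exact hlF_ge z⟩
  choose u₀ hu₀ using hv_mem
  have hmin₀ : IsMinSeq Y π f t y u₀ := by
    unfold IsMinSeq iQ
    rw [iInf]
    have : (fun n => hlF Y π f t y (u₀ n)) = v := funext hu₀
    rw [this]
    exact hv_tendsto
  -- key facts for any minimizing sequence
  have key : ∀ u : ℕ → Y, IsMinSeq Y π f t y u →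
      Filter.liminf (fun n => D (u n)) Filter.atTop ≤
        Filter.limsup (fun n => D (u n)) Filter.atTop ∧
      0 ≤ Filter.liminf (fun n => D (u n)) Filter.atTop ∧
      Filter.limsup (fun n => D (u n)) Filter.atTop ≤ 2 * t * L := by
    intro u hu
    have hbdd_le : Filter.IsBoundedUnder (· ≤ ·) Filter.atTop (fun n => D (u n)) :=
      ⟨2 * M, Filter.eventually_map.mpr (Filter.Eventually.of_forall fun n => hDle (u n))⟩
    have hbdd_ge : Filter.IsBoundedUnder (· ≥ ·) Filter.atTop (fun n => D (u n)) :=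
      ⟨0, Filter.eventually_map.mpr (Filter.Eventually.of_forall fun n => hDnn (u n))⟩
    refine ⟨Filter.liminf_le_limsup hbdd_le hbdd_ge, ?_, ?_⟩
    · exact Filter.le_liminf_of_le hbdd_le.isCoboundedUnder_ge
        (Filter.Eventually.of_forall fun n => hDnn (u n))
    · -- limsup ≤ 2tL
      refine le_of_forall_pos_le_add fun δ hδ => ?_
      have hε : (0:ℝ) < δ^2 / (2*t) := by positivity
      have hev : ∀ᶠ n in Filter.atTop,
          hlF Y π f t y (u n) < iQ Y π f t y + δ^2 / (2*t) :=
        hu.eventually (gt_mem_nhds (by linarith))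
      refine Filter.limsup_le_of_le hbdd_ge.isCoboundedUnder_le ?_
      filter_upwards [hev] with n hn
      -- sup f y ≤ sup f (u n) + L * D (u n)
      have hstep : (⨆ j, f y j) ≤ (⨆ j, f (u n) j) + L * D (u n) := by
        refine ciSup_le fun j => ?_
        have h1 : f y j - f (u n) j ≤ dist (f y) (f (u n)) := coord_sub_le _ _ j
        have h2 : dist (f (u n)) (f y) ≤ L * D (u n) := by
          simpa using hlip (u n) y
        have h3 : f (u n) j ≤ ⨆ i, f (u n) i := le_ciSup (Finite.bddAbove_range _) j
        rw [dist_comm] at h1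
        linarith
      have hF : hlF Y π f t y (u n) = (⨆ j, f (u n) j) + (D (u n))^2 / (2*t) := rfl
      rw [hF] at hn
      have hq : (D (u n))^2 / (2*t) ≤ L * D (u n) + δ^2 / (2*t) := by
        have := hiQ_le
        linarith
      have hq2 : (D (u n))^2 ≤ 2*t*L * D (u n) + δ^2 := by
        have h2t : (0:ℝ) < 2*t := by linarith
        have h3 := (div_le_iff₀ h2t).mp hq
        have h4 : (L * D (u n) + δ^2/(2*t)) * (2*t) = 2*t*L*D (u n) + δ^2 := by
          field_simp
        rw [h4] at h3
        exact h3
      by_contra hcon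
      push_neg at hcon
      have hL0 : (0:ℝ) < L := by linarith
      have h5 : 0 ≤ (D (u n) - (2*t*L+δ)) * D (u n) :=
        mul_nonneg (by linarith) (hDnn (u n))
      have h6 : δ * (2*t*L+δ) < δ * D (u n) := mul_lt_mul_of_pos_left hcon hδ
      have h7 : (0:ℝ) < 2*t*δ*L := by positivity
      nlinarith [h5, h6, h7, hq2]
  -- conclude
  set Sp := { a : ℝ | ∃ u : ℕ → Y, IsMinSeq Y π f t y u ∧
    a = Filter.limsup (fun n => Metric.infDist (f (u n)) (π ⁻¹' {y})) Filter.atTop } with hSp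
  set Sm := { a : ℝ | ∃ u : ℕ → Y, IsMinSeq Y π f t y u ∧
    a = Filter.liminf (fun n => Metric.infDist (f (u n)) (π ⁻¹' {y})) Filter.atTop } with hSm
  have hpmem : Filter.limsup (fun n => D (u₀ n)) Filter.atTop ∈ Sp := ⟨u₀, hmin₀, rfl⟩
  have hmmem : Filter.liminf (fun n => D (u₀ n)) Filter.atTop ∈ Sm := ⟨u₀, hmin₀, rfl⟩
  have hSp_bdd : ∀ a ∈ Sp, a ≤ 2 * t * L := by
    rintro a ⟨u, hu, rfl⟩; exact (key u hu).2.2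
  have hSm_bdd : ∀ a ∈ Sm, 0 ≤ a := by
    rintro a ⟨u, hu, rfl⟩; exact (key u hu).2.1
  constructor
  · calc iDm Y π f y t ≤ Filter.liminf (fun n => D (u₀ n)) Filter.atTop :=
          csInf_le ⟨0, hSm_bdd⟩ hmmem
      _ ≤ Filter.limsup (fun n => D (u₀ n)) Filter.atTop := (key u₀ hmin₀).1
      _ ≤ iDp Y π f y t := le_csSup ⟨2*t*L, hSp_bdd⟩ hpmem
  · exact csSup_le ⟨_, hpmem⟩ hSp_bdd
end

section
/- Let f be a bounded continuous section of π, let (y_n) be a sequence in Y converging to y ∈ Y, and let (t_n) ⊂ (0, ∞) converge to t > 0. Then iD⁻f(y, t) ≤ liminf_{n → ∞} iD⁻f(y_n, t_n). -/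
/-!
Write `D(y, z) = d(f z, π⁻¹ y)`. Openness of `π` makes `y ↦ D(y, z)` upper semicontinuous;
continuity of `π` and compactness of bounded sets make it lower semicontinuous uniformly in `z`,
since inside a compact set the fibres over points near `y` cannot stay away from `π⁻¹ y`. Hence `iQ` is upper
semicontinuous along `(u n, ts n) → (y, t)`, and `F(t, y, ·) ≤ F(ts n, u n, ·) + o(1)` uniformly.
Given `ε`, pick `n` with `iD⁻f(u n, ts n) < L + ε` (`L` the liminf) and an almost minimiser `w` of
`F(ts n, u n, ·)` with `D(u n, w) < L + ε`: then `w` almost minimises `F(t, y, ·)` and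
`D(y, w) < L + 2ε`. Such points form a minimizing sequence for `iQ_t f(y)`, so `iD⁻f(y, t) ≤ L`.
-/

open Metric Set Filter Topology MeasureTheory

open Bornology

section FiberDistance

variable {X Y : Type*} [PseudoMetricSpace X] [TopologicalSpace Y] {π : X → Y}

theorem eventually_infDist_fiber_lt_add (hπ : IsOpenMap π) {y : Y} (hy : (π ⁻¹' {y}).Nonempty)
    (x : X) {δ : ℝ} (hδ : 0 < δ) :
    ∀ᶠ y' in 𝓝 y, infDist x (π ⁻¹' {y'}) < infDist x (π ⁻¹' {y}) + δ := by
  obtain ⟨b, hb, hxb⟩ :=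
    (infDist_lt_iff hy).1 (lt_add_of_pos_right (infDist x (π ⁻¹' {y})) (half_pos hδ))
  filter_upwards [(hπ _ isOpen_ball).mem_nhds ⟨b, mem_ball_self (half_pos hδ), hb⟩] with _ hy'
  obtain ⟨b', hb', rfl⟩ := hy'
  calc infDist x (π ⁻¹' {π b'}) ≤ dist x b + dist b b' :=
        (infDist_le_dist_of_mem (show b' ∈ π ⁻¹' {π b'} from rfl)).trans (dist_triangle _ _ _)
    _ < infDist x (π ⁻¹' {y}) + δ := by linarith [mem_ball'.1 hb']

variable [T2Space Y]

theorem eventually_forall_mem_infDist_fiber_lt (hπ : Continuous π) {K : Set X}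
    (hK : IsCompact K) (y : Y) {δ : ℝ} (hδ : 0 < δ) :
    ∀ᶠ y' in 𝓝 y, ∀ b ∈ K, π b = y' → infDist b (π ⁻¹' {y}) < δ := by
  set far := K ∩ {b | δ ≤ infDist b (π ⁻¹' {y})}
  have hfar : IsCompact (π '' far) :=
    (hK.inter_right (isClosed_le continuous_const (continuous_infDist_pt _))).image hπ
  have hy : y ∉ π '' far := by
    rintro ⟨b, ⟨-, hb⟩, rfl⟩
    have hb' : δ ≤ infDist b (π ⁻¹' {π b}) := hb
    rw [infDist_zero_of_mem (show b ∈ π ⁻¹' {π b} from rfl)] at hb'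
    linarith
  filter_upwards [hfar.isClosed.isOpen_compl.mem_nhds hy] with _ hy' b hb hby'
  subst hby'
  exact not_le.1 fun h => hy' ⟨b, ⟨hb, h⟩, rfl⟩

variable [ProperSpace X] {f : Y → X}

theorem eventually_forall_infDist_fiber_le_add (hπ : Continuous π) (hf : IsBounded (range f))
    (hsec : ∀ y, π (f y) = y) (y : Y) {δ : ℝ} (hδ : 0 < δ) :
    ∀ᶠ y' in 𝓝 y, ∀ z, infDist (f z) (π ⁻¹' {y}) ≤ infDist (f z) (π ⁻¹' {y'}) + δ := by
  set r := diam (range f) + δ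
  have hK : IsCompact (closure (cthickening r (range f))) := hf.cthickening.isCompact_closure
  filter_upwards [eventually_forall_mem_infDist_fiber_lt hπ hK y (half_pos hδ)] with y' hy' z
  obtain ⟨b, hb, hzb⟩ := (infDist_lt_iff ⟨f y', hsec y'⟩).1
    (lt_add_of_pos_right (infDist (f z) (π ⁻¹' {y'})) (half_pos hδ))
  have hzy' : infDist (f z) (π ⁻¹' {y'}) ≤ diam (range f) :=
    (infDist_le_dist_of_mem (show f y' ∈ π ⁻¹' {y'} from hsec y')).trans
      (dist_le_diam_of_mem hf (mem_range_self z) (mem_range_self y'))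
  have hbK : b ∈ closure (cthickening r (range f)) :=
    subset_closure (mem_cthickening_of_dist_le b (f z) r _ (mem_range_self z)
      (by rw [dist_comm]; linarith))
  linarith [hy' b hbK hb, infDist_le_infDist_add_dist (x := f z) (y := b) (s := π ⁻¹' {y})]

theorem continuousAt_infDist_fiber (hπc : Continuous π) (hπo : IsOpenMap π)
    (hf : IsBounded (range f)) (hsec : ∀ y, π (f y) = y) (y z : Y) :
    ContinuousAt (fun y' => infDist (f z) (π ⁻¹' {y'})) y := by
  refine tendsto_order.2 ⟨fun a ha => ?_, fun a ha => ?_⟩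
  · filter_upwards [eventually_forall_infDist_fiber_le_add hπc hf hsec y (half_pos (sub_pos.2 ha))]
      with y' h
    linarith [h z]
  · filter_upwards [eventually_infDist_fiber_lt_add hπo ⟨f y, hsec y⟩ (f z) (sub_pos.2 ha)]
      with y' h
    linarith

end FiberDistance

theorem sq_mul_le_sq_mul_add {a b C δ c c' : ℝ} (ha : 0 ≤ a) (hb : 0 ≤ b) (hbC : b ≤ C)
    (hab : a ≤ b + δ) (hδ : 0 ≤ δ) (hc : 0 ≤ c) :
    a ^ 2 * c ≤ b ^ 2 * c' + (C ^ 2 * |c - c'| + (2 * C * δ + δ ^ 2) * c) := by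
  have hsq : a ^ 2 ≤ b ^ 2 + (2 * C * δ + δ ^ 2) := by nlinarith
  have hc' : b ^ 2 * c ≤ b ^ 2 * c' + C ^ 2 * |c - c'| := by
    nlinarith [le_abs_self (c - c'), abs_nonneg (c - c'), mul_le_mul hbC hbC hb (hb.trans hbC)]
  nlinarith

theorem neg_norm_le_iSup_apply {ι : Type*} [Fintype ι] (x : EuclideanSpace ℝ ι) :
    -‖x‖ ≤ ⨆ j, x j := by
  rcases isEmpty_or_nonempty ι with _ | ⟨⟨j⟩⟩
  · simp [Real.iSup_of_isEmpty]
  · exact le_ciSup_of_le (finite_range _).bddAbove j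
      (neg_le_of_abs_le ((Real.norm_eq_abs _).symm ▸ PiLp.norm_apply_le x j))

section HopfLax

variable {κ : ℕ} {Y : Set (EuclideanSpace ℝ (Fin κ))} {π : EuclideanSpace ℝ (Fin κ) → Y}
  {f : Y → EuclideanSpace ℝ (Fin κ)}

theorem infDist_fiber_le_diam (hf : IsBounded (range f)) (hsec : ∀ y, π (f y) = y) (y z : Y) :
    infDist (f z) (π ⁻¹' {y}) ≤ diam (range f) :=
  (infDist_le_dist_of_mem (show f y ∈ π ⁻¹' {y} from hsec y)).trans
    (dist_le_diam_of_mem hf (mem_range_self z) (mem_range_self y))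

theorem bddBelow_range_hlF (hf : IsBounded (range f)) {t : ℝ} (ht : 0 ≤ t) (y : Y) :
    BddBelow (range (hlF Y π f t y)) := by
  obtain ⟨M, hM⟩ := isBounded_iff_forall_norm_le.1 hf
  refine ⟨-M, forall_mem_range.2 fun z => ?_⟩
  have hsup := neg_norm_le_iSup_apply (f z)
  have hdist : 0 ≤ infDist (f z) (π ⁻¹' {y}) ^ 2 / (2 * t) := by positivity
  unfold hlF
  linarith [hM _ (mem_range_self z)]

theorem iQ_le_hlF (hf : IsBounded (range f)) {t : ℝ} (ht : 0 ≤ t) (y z : Y) :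
    iQ Y π f t y ≤ hlF Y π f t y z :=
  ciInf_le (bddBelow_range_hlF hf ht y) z

theorem exists_isMinSeq_of_forall_hlF_lt {P : Y → Prop} (hf : IsBounded (range f)) {t : ℝ}
    (ht : 0 ≤ t) {y : Y} (h : ∀ σ > 0, ∃ z, P z ∧ hlF Y π f t y z < iQ Y π f t y + σ) :
    ∃ v, IsMinSeq Y π f t y v ∧ ∀ n, P (v n) := by
  have : Nonempty Y := ⟨y⟩
  choose! w hwP hw using h
  refine ⟨fun n => w (1 / (n + 1)), ?_, fun n => hwP _ Nat.one_div_pos_of_nat⟩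
  have hlim : Tendsto (fun n : ℕ => iQ Y π f t y + 1 / ((n : ℝ) + 1)) atTop
      (𝓝 (iQ Y π f t y)) := by
    simpa using
      (tendsto_const_nhds (x := iQ Y π f t y)).add tendsto_one_div_add_atTop_nhds_zero_nat
  exact tendsto_of_tendsto_of_tendsto_of_le_of_le tendsto_const_nhds hlim
    (fun n => iQ_le_hlF hf ht y _) (fun n => (hw _ Nat.one_div_pos_of_nat).le)

theorem liminf_infDist_fiber_mem_Icc (hf : IsBounded (range f)) (hsec : ∀ y, π (f y) = y)
    (y : Y) (v : ℕ → Y) :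
    liminf (fun n => infDist (f (v n)) (π ⁻¹' {y})) atTop ∈ Icc 0 (diam (range f)) :=
  ⟨le_liminf_of_le (isCoboundedUnder_ge_of_le _ fun n => infDist_fiber_le_diam hf hsec y (v n))
      (.of_forall fun _ => infDist_nonneg),
    liminf_le_of_frequently_le (.of_forall fun n => infDist_fiber_le_diam hf hsec y (v n))
      (isBoundedUnder_of ⟨0, fun _ => infDist_nonneg⟩)⟩

theorem iDm_le_liminf (hf : IsBounded (range f)) (hsec : ∀ y, π (f y) = y) {t : ℝ} {y : Y}
    {v : ℕ → Y} (hv : IsMinSeq Y π f t y v) :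
    iDm Y π f y t ≤ liminf (fun n => infDist (f (v n)) (π ⁻¹' {y})) atTop := by
  refine csInf_le ⟨0, ?_⟩ ⟨v, hv, rfl⟩
  rintro _ ⟨w, -, rfl⟩
  exact (liminf_infDist_fiber_mem_Icc hf hsec y w).1

theorem iDm_le_diam (hf : IsBounded (range f)) (hsec : ∀ y, π (f y) = y) (y : Y) (t : ℝ) :
    iDm Y π f y t ≤ diam (range f) := by
  rcases eq_empty_or_nonempty { a : ℝ | ∃ u : ℕ → Y, IsMinSeq Y π f t y u ∧
      a = liminf (fun n => infDist (f (u n)) (π ⁻¹' {y})) atTop } with h | ⟨a, v, hv, rfl⟩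
  · rw [iDm, h, Real.sInf_empty]
    exact diam_nonneg
  · exact (iDm_le_liminf hf hsec hv).trans (liminf_infDist_fiber_mem_Icc hf hsec y v).2

theorem iDm_le_of_forall (hf : IsBounded (range f)) (hsec : ∀ y, π (f y) = y) {t : ℝ}
    (ht : 0 ≤ t) {y : Y} {a : ℝ}
    (h : ∀ σ > 0, ∃ z, infDist (f z) (π ⁻¹' {y}) ≤ a ∧ hlF Y π f t y z < iQ Y π f t y + σ) :
    iDm Y π f y t ≤ a := by
  obtain ⟨v, hv, hva⟩ := exists_isMinSeq_of_forall_hlF_lt hf ht h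
  exact (iDm_le_liminf hf hsec hv).trans
    (liminf_le_of_frequently_le (.of_forall hva) (isBoundedUnder_of ⟨0, fun _ => infDist_nonneg⟩))

theorem exists_infDist_fiber_lt_of_iDm_lt (hf : IsBounded (range f)) (hsec : ∀ y, π (f y) = y)
    {t : ℝ} (ht : 0 ≤ t) {y : Y} {a : ℝ} (h : iDm Y π f y t < a) {σ : ℝ} (hσ : 0 < σ) :
    ∃ z, infDist (f z) (π ⁻¹' {y}) < a ∧ hlF Y π f t y z < iQ Y π f t y + σ := by
  have : Nonempty Y := ⟨y⟩
  obtain ⟨v, hv, -⟩ := exists_isMinSeq_of_forall_hlF_lt (P := fun _ => True) hf ht fun σ hσ =>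
    (exists_lt_of_ciInf_lt (lt_add_of_pos_right _ hσ)).imp fun _ hz => ⟨trivial, hz⟩
  rw [iDm] at h
  obtain ⟨_, ⟨w, hw, rfl⟩, hwa⟩ := exists_lt_of_csInf_lt (by exact ⟨_, v, hv, rfl⟩) h
  have hfreq : ∃ᶠ n in atTop, infDist (f (w n)) (π ⁻¹' {y}) < a :=
    frequently_lt_of_liminf_lt
      (isCoboundedUnder_ge_of_le _ fun n => infDist_fiber_le_diam hf hsec y (w n)) hwa
  obtain ⟨n, hn, hna⟩ :=
    ((hw.eventually (eventually_lt_nhds (lt_add_of_pos_right _ hσ))).and_frequently hfreq).exists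
  exact ⟨w n, hna, hn⟩

variable {ι : Type*} {l : Filter ι} {p : ι → Y} {s : ι → ℝ} {y : Y} {t : ℝ}

theorem tendsto_hlF (hπc : Continuous π) (hπo : IsOpenMap π) (hf : IsBounded (range f))
    (hsec : ∀ y, π (f y) = y) (hp : Tendsto p l (𝓝 y)) (hs : Tendsto s l (𝓝 t)) (ht : t ≠ 0)
    (z : Y) : Tendsto (fun i => hlF Y π f (s i) (p i) z) l (𝓝 (hlF Y π f t y z)) :=
  tendsto_const_nhds.add
    ((((continuousAt_infDist_fiber hπc hπo hf hsec y z).tendsto.comp hp).pow 2).div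
      (tendsto_const_nhds.mul hs) (mul_ne_zero two_ne_zero ht))

theorem eventually_iQ_lt (hπc : Continuous π) (hπo : IsOpenMap π) (hf : IsBounded (range f))
    (hsec : ∀ y, π (f y) = y) (hp : Tendsto p l (𝓝 y)) (hs : Tendsto s l (𝓝 t)) (ht : 0 < t)
    {σ : ℝ} (hσ : 0 < σ) : ∀ᶠ i in l, iQ Y π f (s i) (p i) < iQ Y π f t y + σ := by
  have : Nonempty Y := ⟨y⟩
  obtain ⟨z, hz⟩ := exists_lt_of_ciInf_lt (lt_add_of_pos_right (iQ Y π f t y) hσ)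
  filter_upwards [(tendsto_hlF hπc hπo hf hsec hp hs ht.ne' z).eventually (eventually_lt_nhds hz),
    hs.eventually (lt_mem_nhds ht)] with i hi hsi
  exact (iQ_le_hlF hf hsi.le _ z).trans_lt hi

theorem eventually_forall_hlF_lt (hπc : Continuous π) (hf : IsBounded (range f))
    (hsec : ∀ y, π (f y) = y) (hp : Tendsto p l (𝓝 y)) (hs : Tendsto s l (𝓝 t)) (ht : 0 < t)
    {σ : ℝ} (hσ : 0 < σ) : ∀ᶠ i in l, ∀ z, hlF Y π f t y z < hlF Y π f (s i) (p i) z + σ := by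
  set C := diam (range f)
  have hδ : ∀ᶠ δ in 𝓝[>] (0 : ℝ), (2 * C * δ + δ ^ 2) * (2 * t)⁻¹ < σ / 2 :=
    nhdsWithin_le_nhds <| (Continuous.tendsto' (by fun_prop) 0 0 (by simp)).eventually
      (eventually_lt_nhds (half_pos hσ))
  obtain ⟨δ, hδσ, hδ⟩ := (hδ.and self_mem_nhdsWithin).exists
  have hc : Tendsto (fun i => C ^ 2 * |(2 * t)⁻¹ - (2 * s i)⁻¹|) l (𝓝 0) := by
    have : ContinuousAt (fun r => C ^ 2 * |(2 * t)⁻¹ - (2 * r)⁻¹|) t := by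
      fun_prop (disch := positivity)
    simpa [Function.comp_def] using this.tendsto.comp hs
  filter_upwards [hc.eventually (eventually_lt_nhds (half_pos hσ)),
    hp.eventually (eventually_forall_infDist_fiber_le_add hπc hf hsec y hδ)] with i hci hpi z
  have := sq_mul_le_sq_mul_add infDist_nonneg infDist_nonneg (infDist_fiber_le_diam hf hsec _ z)
    (hpi z) (le_of_lt hδ) (c := (2 * t)⁻¹) (c' := (2 * s i)⁻¹) (by positivity)
  simp only [hlF, div_eq_mul_inv]
  linarith

end HopfLax

theorem stmt_5_general (κ : ℕ)
    (Y : Set (EuclideanSpace ℝ (Fin κ)))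
    (π : EuclideanSpace ℝ (Fin κ) → Y) (hπc : Continuous π) (hπo : IsOpenMap π)
    (f : Y → EuclideanSpace ℝ (Fin κ))
    (hfb : Bornology.IsBounded (Set.range f)) (hsec : ∀ y : Y, π (f y) = y)

    (u : ℕ → Y) (y : Y) (hu : Filter.Tendsto u Filter.atTop (nhds y))
    (ts : ℕ → ℝ) (t : ℝ) (ht : 0 < t)
    (htt : Filter.Tendsto ts Filter.atTop (nhds t)) :
    iDm Y π f y t ≤ Filter.liminf (fun n => iDm Y π f (u n) (ts n)) Filter.atTop := by
  set L := liminf (fun n => iDm Y π f (u n) (ts n)) atTop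
  have hL : ∀ {ε}, 0 < ε → ∃ᶠ n in atTop, iDm Y π f (u n) (ts n) < L + ε := fun hε =>
    frequently_lt_of_liminf_lt (isCoboundedUnder_ge_of_le _ fun n => iDm_le_diam hfb hsec _ _)
      (lt_add_of_pos_right L hε)
  refine le_of_forall_pos_le_add fun ε hε => iDm_le_of_forall hfb hsec ht.le fun σ hσ => ?_
  obtain ⟨n, ⟨⟨hQ, hF⟩, hD, htn⟩, hn⟩ :=
    (((eventually_iQ_lt hπc hπo hfb hsec hu htt ht (by positivity : 0 < σ / 3)).and
      (eventually_forall_hlF_lt hπc hfb hsec hu htt ht (by positivity : 0 < σ / 3))).and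
      ((hu.eventually (eventually_forall_infDist_fiber_le_add hπc hfb hsec y (half_pos hε))).and
        (htt.eventually (lt_mem_nhds ht)))).and_frequently (hL (half_pos hε)) |>.exists
  obtain ⟨w, hwD, hwF⟩ := exists_infDist_fiber_lt_of_iDm_lt hfb hsec htn.le hn
    (by positivity : 0 < σ / 3)
  exact ⟨w, by linarith [hD w], by linarith [hF w]⟩

theorem stmt_5 (κ : ℕ) (hκ : 1 ≤ κ)
    (Y : Set (EuclideanSpace ℝ (Fin κ))) (hY : Y.Nonempty) (hYb : Bornology.IsBounded Y)
    (π : EuclideanSpace ℝ (Fin κ) → Y) (hπc : Continuous π) (hπo : IsOpenMap π)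
    (hπs : Function.Surjective π)
    (f : Y → EuclideanSpace ℝ (Fin κ)) (hfc : Continuous f)
    (hfb : Bornology.IsBounded (Set.range f)) (hsec : ∀ y : Y, π (f y) = y)

    (u : ℕ → Y) (y : Y) (hu : Filter.Tendsto u Filter.atTop (nhds y))
    (ts : ℕ → ℝ) (hts : ∀ n, 0 < ts n) (t : ℝ) (ht : 0 < t)
    (htt : Filter.Tendsto ts Filter.atTop (nhds t)) :
    iDm Y π f y t ≤ Filter.liminf (fun n => iDm Y π f (u n) (ts n)) Filter.atTop :=
  stmt_5_general κ Y π hπc hπo f hfb hsec u y hu ts t ht htt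
end

section
/- For every bounded continuous section f of π, every y ∈ Y and every t > 0, the right derivative of s ↦ iQ_s f(y) at t exists and equals −(iD⁺f(y, t))²/(2t²), i.e. lim_{s → t⁺} (iQ_s f(y) − iQ_t f(y))/(s − t) = −(iD⁺f(y, t))²/(2t²). -/
open Metric Set Filter Topology MeasureTheory

/-!
Put `g z = max_j f_j(z)`, `D z = d(f(z), π⁻¹(y))` and `c = 1/(2s)`. Then `iQ_s f(y)` is the
infimum over `z` of the affine functions `c ↦ g z + c · D z²`, whose slopes are bounded. For such
an infimum `ψ` (Danskin's theorem) the left derivative at `c` is the supremum `H` of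
`limsup D(u n)²` over minimizing sequences `u` at `c`: near-minimizers at `c` with `D²` close to `H`
give `ψ(c') ≤ ψ(c) - (c - c') H` for `c' < c`, while near-minimizers at `c' < c` are, for `c'`
close to `c`, near-minimizers at `c`, where `D²` cannot asymptotically exceed `H`. As `√` is
monotone and continuous, `H = iD⁺f(y,t)²`, and the chain rule through `s ↦ 1/(2s)` gives the
factor `-1/(2t²)`.
-/
section AffineInfimum

variable {Z : Type*}

noncomputable def infAffine (g h : Z → ℝ) (c : ℝ) : ℝ :=
  ⨅ z, g z + c * h z

def nearMinimizers (g h : Z → ℝ) (c η : ℝ) : Set Z :=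
  {z | g z + c * h z ≤ infAffine g h c + η}

def IsMinimizingSeq (g h : Z → ℝ) (c : ℝ) (u : ℕ → Z) : Prop :=
  Tendsto (fun n => g (u n) + c * h (u n)) atTop (𝓝 (infAffine g h c))

def minimizerLimsups (g h : Z → ℝ) (c : ℝ) : Set ℝ :=
  {a | ∃ u, IsMinimizingSeq g h c u ∧ a = limsup (fun n => h (u n)) atTop}

noncomputable def minimizerSup (g h : Z → ℝ) (c : ℝ) : ℝ :=
  sSup (minimizerLimsups g h c)

variable {g h : Z → ℝ} {C : ℝ}

lemma mul_le_abs_mul_of_abs_le {x y : ℝ} (hy : |y| ≤ C) : x * y ≤ |x| * C :=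
  calc x * y ≤ |x * y| := le_abs_self _
    _ = |x| * |y| := abs_mul x y
    _ ≤ |x| * C := mul_le_mul_of_nonneg_left hy (abs_nonneg x)

lemma bddBelow_range_affine (hg : BddBelow (range g)) (hh : ∀ z, |h z| ≤ C) (c : ℝ) :
    BddBelow (range fun z => g z + c * h z) := by
  obtain ⟨m, hm⟩ := hg
  refine ⟨m - |c| * C, ?_⟩
  rintro _ ⟨z, rfl⟩
  have hgz : m ≤ g z := hm ⟨z, rfl⟩
  have hcz : -c * h z ≤ |-c| * C := mul_le_abs_mul_of_abs_le (hh z)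
  rw [abs_neg] at hcz
  linarith

lemma infAffine_le (hg : BddBelow (range g)) (hh : ∀ z, |h z| ≤ C) (c : ℝ) (z : Z) :
    infAffine g h c ≤ g z + c * h z :=
  ciInf_le (bddBelow_range_affine hg hh c) z

lemma infAffine_le_add_abs_mul [Nonempty Z] (hg : BddBelow (range g)) (hh : ∀ z, |h z| ≤ C)
    (l c : ℝ) : infAffine g h l ≤ infAffine g h c + |l - c| * C := by
  refine sub_le_iff_le_add.mp (le_ciInf fun z => ?_)
  have hlz := infAffine_le hg hh l z
  have hdiff : (l - c) * h z ≤ |l - c| * C := mul_le_abs_mul_of_abs_le (hh z)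
  linarith

lemma nonempty_nearMinimizers [Nonempty Z] (c : ℝ) {η : ℝ} (hη : 0 < η) :
    (nearMinimizers g h c η).Nonempty := by
  obtain ⟨z, hz⟩ := exists_lt_of_ciInf_lt (lt_add_of_pos_right (infAffine g h c) hη)
  exact ⟨z, hz.le⟩

lemma isMinimizingSeq_of_mem_nearMinimizers (hg : BddBelow (range g)) (hh : ∀ z, |h z| ≤ C)
    {c : ℝ} {u : ℕ → Z} {η : ℕ → ℝ} (hu : ∀ n, u n ∈ nearMinimizers g h c (η n))
    (hη : Tendsto η atTop (𝓝 0)) : IsMinimizingSeq g h c u := by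
  have hbound : Tendsto (fun n => infAffine g h c + η n) atTop (𝓝 (infAffine g h c)) := by
    simpa using tendsto_const_nhds.add hη
  exact tendsto_of_tendsto_of_tendsto_of_le_of_le tendsto_const_nhds hbound
    (fun n => infAffine_le hg hh c (u n)) hu

lemma exists_isMinimizingSeq [Nonempty Z] (hg : BddBelow (range g)) (hh : ∀ z, |h z| ≤ C)
    (c : ℝ) : ∃ u, IsMinimizingSeq g h c u := by
  choose u hu using fun n : ℕ => nonempty_nearMinimizers (g := g) (h := h) c (η := 1 / (n + 1))
    Nat.one_div_pos_of_nat
  exact ⟨u, isMinimizingSeq_of_mem_nearMinimizers hg hh hu tendsto_one_div_add_atTop_nhds_zero_nat⟩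

lemma isBoundedUnder_le_comp_of_abs_le (hh : ∀ z, |h z| ≤ C) (u : ℕ → Z) :
    IsBoundedUnder (· ≤ ·) atTop (fun n => h (u n)) :=
  isBoundedUnder_of ⟨C, fun n => (le_abs_self _).trans (hh (u n))⟩

lemma isCoboundedUnder_le_comp_of_abs_le (hh : ∀ z, |h z| ≤ C) (u : ℕ → Z) :
    IsCoboundedUnder (· ≤ ·) atTop (fun n => h (u n)) :=
  isCoboundedUnder_le_of_le atTop fun n => neg_le_of_abs_le (hh (u n))

lemma bddAbove_minimizerLimsups (hh : ∀ z, |h z| ≤ C) (c : ℝ) :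
    BddAbove (minimizerLimsups g h c) := by
  refine ⟨C, ?_⟩
  rintro _ ⟨u, -, rfl⟩
  exact limsup_le_of_le (isCoboundedUnder_le_comp_of_abs_le hh u)
    (Eventually.of_forall fun n => (le_abs_self _).trans (hh (u n)))

lemma nonempty_minimizerLimsups [Nonempty Z] (hg : BddBelow (range g)) (hh : ∀ z, |h z| ≤ C)
    (c : ℝ) : (minimizerLimsups g h c).Nonempty := by
  obtain ⟨u, hu⟩ := exists_isMinimizingSeq hg hh c
  exact ⟨_, u, hu, rfl⟩

lemma limsup_le_minimizerSup (hh : ∀ z, |h z| ≤ C) {c : ℝ} {u : ℕ → Z}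
    (hu : IsMinimizingSeq g h c u) : limsup (fun n => h (u n)) atTop ≤ minimizerSup g h c :=
  le_csSup (bddAbove_minimizerLimsups hh c) ⟨u, hu, rfl⟩

lemma minimizerSup_nonneg (hh : ∀ z, |h z| ≤ C) (h0 : ∀ z, 0 ≤ h z) (c : ℝ) :
    0 ≤ minimizerSup g h c := by
  refine Real.sSup_nonneg ?_
  rintro _ ⟨u, -, rfl⟩
  exact le_limsup_of_frequently_le (Frequently.of_forall fun n => h0 (u n))
    (isBoundedUnder_le_comp_of_abs_le hh u)

lemma exists_forall_mem_nearMinimizers_le (hg : BddBelow (range g)) (hh : ∀ z, |h z| ≤ C)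
    (c : ℝ) {ε : ℝ} (hε : 0 < ε) :
    ∃ η > 0, ∀ z ∈ nearMinimizers g h c η, h z ≤ minimizerSup g h c + ε := by
  by_contra! hfar
  choose u hu hlt using fun n : ℕ => hfar (1 / (n + 1)) Nat.one_div_pos_of_nat
  have hmin := isMinimizingSeq_of_mem_nearMinimizers hg hh hu
    tendsto_one_div_add_atTop_nhds_zero_nat
  have hlarge : minimizerSup g h c + ε ≤ limsup (fun n => h (u n)) atTop :=
    le_limsup_of_frequently_le (Frequently.of_forall fun n => (hlt n).le)
      (isBoundedUnder_le_comp_of_abs_le hh u)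
  linarith [limsup_le_minimizerSup hh hmin]

lemma exists_mem_nearMinimizers_lt [Nonempty Z] (hg : BddBelow (range g))
    (hh : ∀ z, |h z| ≤ C) (c : ℝ) {ε : ℝ} (hε : 0 < ε) :
    ∃ z ∈ nearMinimizers g h c ε, minimizerSup g h c - ε < h z := by
  obtain ⟨_, ⟨u, hu, rfl⟩, hlt⟩ := exists_lt_of_lt_csSup (nonempty_minimizerLimsups hg hh c)
    (sub_lt_self (minimizerSup g h c) hε)
  have hfreq : ∃ᶠ n in atTop, minimizerSup g h c - ε < h (u n) :=
    frequently_lt_of_lt_limsup (isCoboundedUnder_le_comp_of_abs_le hh u) hlt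
  have hnear : ∀ᶠ n in atTop, u n ∈ nearMinimizers g h c ε :=
    (hu.eventually_lt_const (lt_add_of_pos_right _ hε)).mono fun n hn => hn.le
  obtain ⟨n, hn, hnz⟩ := (hfreq.and_eventually hnear).exists
  exact ⟨u n, hnz, hn⟩

lemma infAffine_le_sub_mul_minimizerSup [Nonempty Z] (hg : BddBelow (range g))
    (hh : ∀ z, |h z| ≤ C) {l c : ℝ} (hl : l ≤ c) :
    infAffine g h l ≤ infAffine g h c - (c - l) * minimizerSup g h c := by
  set H := minimizerSup g h c
  have hδ : 0 ≤ c - l := sub_nonneg.mpr hl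
  have happrox : ∀ ε > 0,
      infAffine g h l ≤ infAffine g h c - (c - l) * H + (1 + (c - l)) * ε := by
    intro ε hε
    obtain ⟨z, hz, hHz⟩ := exists_mem_nearMinimizers_lt hg hh c hε
    have hz' : g z + c * h z ≤ infAffine g h c + ε := hz
    calc infAffine g h l ≤ g z + l * h z := infAffine_le hg hh l z
      _ = (g z + c * h z) - (c - l) * h z := by ring
      _ ≤ (infAffine g h c + ε) - (c - l) * (H - ε) := by gcongr
      _ = infAffine g h c - (c - l) * H + (1 + (c - l)) * ε := by ring
  refine le_of_forall_pos_le_add fun ε hε => ?_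
  have hpos : 0 < 1 + (c - l) := by linarith
  simpa only [mul_div_cancel₀ ε hpos.ne'] using happrox (ε / (1 + (c - l))) (by positivity)

lemma minimizerSup_le_slope_infAffine [Nonempty Z] (hg : BddBelow (range g))
    (hh : ∀ z, |h z| ≤ C) {l c : ℝ} (hl : l < c) :
    minimizerSup g h c ≤ slope (infAffine g h) c l := by
  rw [slope_def_field, le_div_iff_of_neg (sub_neg.mpr hl)]
  linarith [infAffine_le_sub_mul_minimizerSup hg hh hl.le]

lemma eventually_slope_infAffine_le [Nonempty Z] (hg : BddBelow (range g))
    (hh : ∀ z, |h z| ≤ C) (c : ℝ) {ε : ℝ} (hε : 0 < ε) :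
    ∀ᶠ l in 𝓝[<] c, slope (infAffine g h) c l ≤ minimizerSup g h c + 2 * ε := by
  obtain ⟨η, hη, hnear⟩ := exists_forall_mem_nearMinimizers_le hg hh c hε
  have hC : 0 ≤ C := (abs_nonneg _).trans (hh (Classical.arbitrary Z))
  have hK : 0 < ε + 2 * C := by positivity
  filter_upwards [Ioo_mem_nhdsLT (sub_lt_self c (div_pos hη hK))] with l ⟨hl, hlc⟩
  have hδ : 0 < c - l := sub_pos.mpr hlc
  have hδη : (c - l) * (ε + 2 * C) < η := by
    rw [← lt_div_iff₀ hK]; linarith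
  obtain ⟨z, hz⟩ := nonempty_nearMinimizers (g := g) (h := h) l (mul_pos hδ hε)
  have hz' : g z + l * h z ≤ infAffine g h l + (c - l) * ε := hz
  have hhz : (c - l) * h z ≤ (c - l) * C :=
    mul_le_mul_of_nonneg_left ((le_abs_self _).trans (hh z)) hδ.le
  have hlip := infAffine_le_add_abs_mul hg hh l c
  rw [abs_sub_comm, abs_of_pos hδ] at hlip
  have hzc : z ∈ nearMinimizers g h c η := by
    show g z + c * h z ≤ infAffine g h c + η
    linarith
  have hHz : (c - l) * h z ≤ (c - l) * (minimizerSup g h c + ε) :=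
    mul_le_mul_of_nonneg_left (hnear z hzc) hδ.le
  have hcz := infAffine_le hg hh c z
  rw [slope_def_field, div_le_iff_of_neg (sub_neg.mpr hlc)]
  linarith

theorem hasDerivWithinAt_infAffine_Iio [Nonempty Z] (hg : BddBelow (range g))
    (hh : ∀ z, |h z| ≤ C) (c : ℝ) :
    HasDerivWithinAt (infAffine g h) (minimizerSup g h c) (Iio c) c := by
  rw [hasDerivWithinAt_iff_tendsto_slope, sdiff_singleton_eq_self self_notMem_Iio]
  refine tendsto_order.2 ⟨fun a ha => ?_, fun b hb => ?_⟩
  · filter_upwards [self_mem_nhdsWithin] with l hl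
    exact ha.trans_le (minimizerSup_le_slope_infAffine hg hh hl)
  · have hε : 0 < (b - minimizerSup g h c) / 4 := by linarith
    filter_upwards [eventually_slope_infAffine_le hg hh c hε] with l hl
    linarith

lemma sSup_limsup_comp_eq_apply_minimizerSup [Nonempty Z] (hg : BddBelow (range g))
    (hh : ∀ z, |h z| ≤ C) (c : ℝ) {φ : ℝ → ℝ} (hφ : Monotone φ) (hφc : Continuous φ) :
    sSup {a | ∃ u, IsMinimizingSeq g h c u ∧ a = limsup (fun n => φ (h (u n))) atTop} =
      φ (minimizerSup g h c) := by
  have hmap : ∀ u : ℕ → Z,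
      φ (limsup (fun n => h (u n)) atTop) = limsup (fun n => φ (h (u n))) atTop := fun u =>
    hφ.map_limsup_of_continuousAt _ hφc.continuousAt (isBoundedUnder_le_comp_of_abs_le hh u)
      (isCoboundedUnder_le_comp_of_abs_le hh u)
  have himage : {a | ∃ u, IsMinimizingSeq g h c u ∧ a = limsup (fun n => φ (h (u n))) atTop} =
      φ '' minimizerLimsups g h c := by
    ext a
    constructor
    · rintro ⟨u, hu, rfl⟩
      exact ⟨_, ⟨u, hu, rfl⟩, hmap u⟩
    · rintro ⟨_, ⟨u, hu, rfl⟩, rfl⟩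
      exact ⟨u, hu, hmap u⟩
  rw [himage, minimizerSup, hφ.map_csSup_of_continuousAt hφc.continuousAt
    (nonempty_minimizerLimsups hg hh c) (bddAbove_minimizerLimsups hh c)]

end AffineInfimum

theorem stmt_10_general (κ : ℕ) (hκ : 1 ≤ κ)
    (Y : Set (EuclideanSpace ℝ (Fin κ))) (hY : Y.Nonempty)
    (π : EuclideanSpace ℝ (Fin κ) → Y)
    (f : Y → EuclideanSpace ℝ (Fin κ))
    (hfb : Bornology.IsBounded (Set.range f)) (hsec : ∀ y : Y, π (f y) = y)

    (y : Y) (t : ℝ) (ht : 0 < t) :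
    HasDerivWithinAt (fun s => iQ Y π f s y)
      (-(iDp Y π f y t)^2 / (2*t^2)) (Set.Ioi t) t := by
  have := hY.to_subtype
  set g : Y → ℝ := fun z => ⨆ j, f z j
  set D : Y → ℝ := fun z => infDist (f z) (π ⁻¹' {y})
  have hg : BddBelow (range g) := by
    obtain ⟨R, hR⟩ := hfb.exists_norm_le
    refine ⟨-R, ?_⟩
    rintro _ ⟨z, rfl⟩
    have hj : f z ⟨0, hκ⟩ ≤ g z := le_ciSup (finite_range _).bddAbove _
    have hnorm : ‖f z ⟨0, hκ⟩‖ ≤ R := (PiLp.norm_apply_le _ _).trans (hR _ (mem_range_self z))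
    linarith [neg_abs_le (f z ⟨0, hκ⟩), Real.norm_eq_abs (f z ⟨0, hκ⟩)]
  have hD : ∀ z, |D z ^ 2| ≤ diam (range f) ^ 2 := by
    intro z
    have hfy : f y ∈ π ⁻¹' {y} := hsec y
    rw [abs_of_nonneg (sq_nonneg _)]
    exact pow_le_pow_left₀ infDist_nonneg ((infDist_le_dist_of_mem hfy).trans
      (dist_le_diam_of_mem hfb (mem_range_self z) (mem_range_self y))) 2
  have hQ : (fun s => iQ Y π f s y) = infAffine g (fun z => D z ^ 2) ∘ fun s => (2 * s)⁻¹ := by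
    ext s
    simp only [iQ, hlF, infAffine, Function.comp, div_eq_inv_mul, g, D]
  have hP : iDp Y π f y t = √(minimizerSup g (fun z => D z ^ 2) (2 * t)⁻¹) := by
    rw [← sSup_limsup_comp_eq_apply_minimizerSup hg hD _ Real.sqrt_monotone Real.continuous_sqrt]
    simp only [iDp, IsMinSeq, IsMinimizingSeq, iQ, infAffine, hlF, div_eq_inv_mul,
      Real.sqrt_sq infDist_nonneg, g, D]
  have hinv : HasDerivAt (fun s => (2 * s)⁻¹) (-(2 * 1) / (2 * t) ^ 2) t :=
    ((hasDerivAt_id t).const_mul 2).inv (by positivity)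
  have hmaps : MapsTo (fun s => (2 * s)⁻¹) (Ioi t) (Iio (2 * t)⁻¹) := fun s hs =>
    inv_strictAnti₀ (by positivity) (by linarith [mem_Ioi.mp hs] : 2 * t < 2 * s)
  have hderiv := (hasDerivWithinAt_infAffine_Iio hg hD _).comp t hinv.hasDerivWithinAt hmaps
  rw [hQ, hP, Real.sq_sqrt (minimizerSup_nonneg hD (fun z => sq_nonneg (D z)) _)]
  exact hderiv.congr_deriv (by ring)

theorem stmt_10 (κ : ℕ) (hκ : 1 ≤ κ)
    (Y : Set (EuclideanSpace ℝ (Fin κ))) (hY : Y.Nonempty) (hYb : Bornology.IsBounded Y)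
    (π : EuclideanSpace ℝ (Fin κ) → Y) (hπc : Continuous π) (hπo : IsOpenMap π)
    (hπs : Function.Surjective π)
    (f : Y → EuclideanSpace ℝ (Fin κ)) (hfc : Continuous f)
    (hfb : Bornology.IsBounded (Set.range f)) (hsec : ∀ y : Y, π (f y) = y)

    (y : Y) (t : ℝ) (ht : 0 < t) :
    HasDerivWithinAt (fun s => iQ Y π f s y)
      (-(iDp Y π f y t)^2 / (2*t^2)) (Set.Ioi t) t :=
  stmt_10_general κ hκ Y hY π f hfb hsec y t ht
end
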